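/- For every x ∈ ℝⁿ, xᵀ A x ≥ (1 / Σ_{i=1}^n r_i) · ‖E D x‖², where ‖·‖ is the Euclidean norm on ℝⁿ. -/
import Mathlib


open Matrix Real Finset

/-- The orthogonal projection matrix `P = I − g gᵀ` for `g ∈ ℝ²`. -/
noncomputable def proj (g : Fin 2 → ℝ) : Matrix (Fin 2) (Fin 2) ℝ :=
  1 - Matrix.vecMulVec g g

/-- The 2×2 rotation matrix `R(α)`. -/
noncomputable def Rmat (α : ℝ) : Matrix (Fin 2) (Fin 2) ℝ :=
  !![Real.cos α, -Real.sin α; Real.sin α, Real.cos α]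

/-- `x^⊥ := R(π/2) x`. -/
noncomputable def perp (x : Fin 2 → ℝ) : Fin 2 → ℝ :=
  Rmat (Real.pi / 2) *ᵥ x

/-- The matrix `A` whose row `i` has entries
`[A]_{i,i−1} = (1/r_{i−1}) g_iᵀ P_{i−1} g_{i−2}`,
`[A]_{i,i} = (1/r_{i−1}) g_iᵀ P_{i−1} g_i + (1/r_i) g_{i−1}ᵀ P_i g_{i−1}`,
`[A]_{i,i+1} = (1/r_i) g_{i−1}ᵀ P_i g_{i+1}`, and all other entries of row `i` zero
(indices modulo `n`). -/
noncomputable def Amat (n : ℕ) [NeZero n] (g : ZMod n → Fin 2 → ℝ) (r : ZMod n → ℝ) :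
    Matrix (ZMod n) (ZMod n) ℝ := fun i j =>
  (if j = i - 1 then (1 / r (i - 1)) * (g i ⬝ᵥ proj (g (i - 1)) *ᵥ g (i - 2)) else 0) +
  (if j = i then
      (1 / r (i - 1)) * (g i ⬝ᵥ proj (g (i - 1)) *ᵥ g i) +
      (1 / r i) * (g (i - 1) ⬝ᵥ proj (g i) *ᵥ g (i - 1))
    else 0) +
  (if j = i + 1 then (1 / r i) * (g (i - 1) ⬝ᵥ proj (g i) *ᵥ g (i + 1)) else 0)

/-- The diagonal matrix `D` with diagonal entries `dᵢ = (gᵢ^⊥)ᵀ g_{i−1}`. -/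
noncomputable def Dmat (n : ℕ) [NeZero n] (g : ZMod n → Fin 2 → ℝ) :
    Matrix (ZMod n) (ZMod n) ℝ :=
  Matrix.diagonal fun i => perp (g i) ⬝ᵥ g (i - 1)

/-- The incidence matrix `E` of the directed circular graph on `n` vertices:
`[E]_{i,i} = 1`, `[E]_{i,i+1} = −1` (indices modulo `n`), all other entries zero. -/
def Emat (n : ℕ) [NeZero n] : Matrix (ZMod n) (ZMod n) ℝ := fun i j =>
  if j = i then 1 else if j = i + 1 then -1 else 0

lemma perp_apply (x : Fin 2 → ℝ) : perp x = ![-(x 1), x 0] := by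
  funext i
  fin_cases i <;>
    simp [perp, Rmat, mulVec, dotProduct, Fin.sum_univ_two]

lemma proj_eq (g a b : Fin 2 → ℝ) (hg : g ⬝ᵥ g = 1) :
    a ⬝ᵥ proj g *ᵥ b = (perp g ⬝ᵥ a) * (perp g ⬝ᵥ b) := by
  simp [proj, perp_apply, dotProduct, mulVec, vecMulVec, Fin.sum_univ_two,
    Matrix.one_apply] at *
  linear_combination (-(a 0 * b 0 + a 1 * b 1)) * hg

lemma perp_anti (a b : Fin 2 → ℝ) : perp a ⬝ᵥ b = -(perp b ⬝ᵥ a) := by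
  simp [perp_apply, dotProduct, Fin.sum_univ_two]; ring


/-- For every `x ∈ ℝⁿ`, `xᵀ A x ≥ (1 / Σᵢ rᵢ) · ‖E D x‖²`. -/
theorem stmt9 (n : ℕ) [NeZero n] (hn : 3 ≤ n)
    (g : ZMod n → Fin 2 → ℝ) (hg : ∀ i, g i ⬝ᵥ g i = 1)
    (r : ZMod n → ℝ) (hr : ∀ i, 0 < r i) (x : ZMod n → ℝ) :
    (1 / ∑ i, r i) *
        ((Emat n *ᵥ Dmat n g *ᵥ x) ⬝ᵥ (Emat n *ᵥ Dmat n g *ᵥ x)) ≤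
      x ⬝ᵥ Amat n g r *ᵥ x := by
  set d : ZMod n → ℝ := fun i => perp (g i) ⬝ᵥ g (i - 1) with hd
  set y : ZMod n → ℝ := fun i => d i * x i with hy
  have h1 : (1 : ZMod n) ≠ 0 := by
    have : ((1 : ℕ) : ZMod n) ≠ 0 := by
      rw [Ne, ZMod.natCast_eq_zero_iff, Nat.dvd_one]
      omega
    simpa using this
  have hne : ∀ i : ZMod n, i + 1 ≠ i := fun i h => h1 (by linear_combination h)
  -- Step B: LHS norm
  have hDx : Dmat n g *ᵥ x = y := by
    funext i
    simp [Dmat, mulVec_diagonal, hy, hd]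
  have hEy : ∀ w : ZMod n → ℝ, Emat n *ᵥ w = fun i => w i - w (i + 1) := by
    intro w
    funext i
    have : ∀ j, Emat n i j * w j =
        (if j = i then w j else 0) + (if j = i + 1 then -w j else 0) := by
      intro j
      by_cases hji : j = i
      · subst hji
        simp [Emat, Ne.symm (hne j)]
      · by_cases hji1 : j = i + 1
        · subst hji1
          simp [Emat, hne i]
        · simp [Emat, hji, hji1]
    simp only [mulVec, dotProduct, this, Finset.sum_add_distrib, Finset.sum_ite_eq',
      Finset.mem_univ, if_true]
    ring
  have hLHS : (Emat n *ᵥ Dmat n g *ᵥ x) ⬝ᵥ (Emat n *ᵥ Dmat n g *ᵥ x) =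
      ∑ i, (y i - y (i + 1)) ^ 2 := by
    rw [hDx, hEy]
    simp [dotProduct, sq]
  -- Step A: RHS quadratic form
  have hAv : ∀ i, (Amat n g r *ᵥ x) i =
      (1 / r (i - 1)) * (-(d i) * d (i - 1)) * x (i - 1) +
      ((1 / r (i - 1)) * (d i * d i) + (1 / r i) * (d i * d i)) * x i +
      (1 / r i) * (d i * (-(d (i + 1)))) * x (i + 1) := by
    intro i
    have hi11 : i - 1 - 1 = i - 2 := by ring
    have hi10 : i + 1 - 1 = i := by ring
    have e1 : g i ⬝ᵥ proj (g (i - 1)) *ᵥ g (i - 2) = -(d i) * d (i - 1) := by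
      rw [proj_eq _ _ _ (hg _), perp_anti (g (i - 1)) (g i)]
      simp only [hd, hi11]
      try ring
    have e2 : g i ⬝ᵥ proj (g (i - 1)) *ᵥ g i = d i * d i := by
      rw [proj_eq _ _ _ (hg _), perp_anti (g (i - 1)) (g i)]
      simp only [hd]
      try ring
    have e3 : g (i - 1) ⬝ᵥ proj (g i) *ᵥ g (i - 1) = d i * d i := by
      rw [proj_eq _ _ _ (hg _)]
      try simp only [hd]
    have e4 : g (i - 1) ⬝ᵥ proj (g i) *ᵥ g (i + 1) = d i * (-(d (i + 1))) := by
      rw [proj_eq _ _ _ (hg _), perp_anti (g i) (g (i + 1))]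
      simp only [hd, hi10]
      try ring
    rw [show (Amat n g r *ᵥ x) i = ∑ j, Amat n g r i j * x j from rfl]
    simp only [Amat, e1, e2, e3, e4, add_mul, ite_mul, zero_mul,
      Finset.sum_add_distrib, Finset.sum_ite_eq', Finset.mem_univ, if_true]
  have hRHS : x ⬝ᵥ Amat n g r *ᵥ x = ∑ i, (1 / r i) * (y i - y (i + 1)) ^ 2 := by
    have expand : x ⬝ᵥ Amat n g r *ᵥ x =
        ∑ i, ((1 / r (i - 1)) * (y i ^ 2 - y (i - 1) * y i) +
              (1 / r i) * (y i ^ 2 - y i * y (i + 1))) := by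
      simp only [dotProduct, hAv]
      refine Finset.sum_congr rfl fun i _ => ?_
      simp only [hy]
      ring
    have shift : ∑ i : ZMod n, (1 / r (i - 1)) * (y i ^ 2 - y (i - 1) * y i) =
        ∑ i : ZMod n, (1 / r i) * (y (i + 1) ^ 2 - y i * y (i + 1)) := by
      refine (Fintype.sum_equiv (Equiv.addRight (1 : ZMod n)) _ _ fun i => ?_).symm
      simp [Equiv.coe_addRight, add_sub_cancel_right]
    rw [expand, Finset.sum_add_distrib, shift, ← Finset.sum_add_distrib]
    refine Finset.sum_congr rfl fun i _ => ?_
    ring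
  rw [hLHS, hRHS, Finset.mul_sum]
  refine Finset.sum_le_sum fun i _ => ?_
  have hS : r i ≤ ∑ j, r j :=
    Finset.single_le_sum (fun j _ => (hr j).le) (Finset.mem_univ i)
  have := one_div_le_one_div_of_le (hr i) hS
  exact mul_le_mul_of_nonneg_right this (sq_nonneg _)
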